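/- The set L₁ = {t ∈ {a,b,c}^({L,R}*) : every infinite branch of t contains at least one occurrence of a} has coin-flipping measure 1/2. -/

import Mathlib

/-!
A tree lies in `L1` iff every branch meets `a` within some bounded depth `n` (König's lemma, i.e.
compactness of Cantor space), so `μ L1` is the limit of the measures of these depth-`n` events.
Such an event only depends on the labels of the finitely many vertices of depth `< n`, and
splitting a labelling into its root label and its two subtrees shows that its measure `x n`
satisfies `x 0 = 0` and `x (n + 1) = 1/3 + 2/3 * x n ^ 2`. These iterates converge to `1/2`, the
least fixed point.
-/

open MeasureTheory

/-- The alphabet {a,b,c}, with `0` playing the role of the letter `a`. -/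
abbrev Letter := Fin 3

/-- The prefix of length `n` of an infinite branch `b : ℕ → Bool`. -/
def branchPrefix (b : ℕ → Bool) (n : ℕ) : List Bool := List.ofFn (fun i : Fin n => b i)

/-- The set of trees having at least one occurrence of `a` on every branch. -/
def L1 : Set (List Bool → Letter) :=
  {t | ∀ b : ℕ → Bool, ∃ n : ℕ, t (branchPrefix b n) = 0}

open Filter Topology

theorem measure_restrict_preimage {ι α : Type*} [MeasurableSpace α] [MeasurableSingletonClass α]
    [Nonempty α] {μ : Measure (ι → α)} {c : ENNReal}
    (hμ : ∀ (s : Finset ι) (f : ι → α), μ {t | ∀ v ∈ s, t v = f v} = c ^ s.card)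
    (s : Finset ι) (P : Finset (s → α)) :
    μ (s.restrict ⁻¹' P) = P.card * c ^ s.card := by
  classical
  have hfiber (g : s → α) : μ (s.restrict ⁻¹' {g}) = c ^ s.card := by
    obtain ⟨f, rfl⟩ : ∃ f : ι → α, s.restrict f = g :=
      ⟨fun v => if h : v ∈ s then g ⟨v, h⟩ else Classical.arbitrary α, by ext; simp⟩
    rw [← hμ s f]
    congr 1
    ext t
    simp [funext_iff]
  have hmeas := Finset.measurable_restrict (X := fun _ : ι => α) s
  rw [← Measure.map_apply hmeas P.measurableSet, ← sum_measure_singleton]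
  simp [Measure.map_apply hmeas (measurableSet_singleton _), hfiber]

-- `1/2 - x (n + 1) = 2/3 * (1/2 - x n) * (1/2 + x n)`, a contraction by `2/3` on `[0, 1/2]`.
theorem tendsto_half_of_recurrence {x : ℕ → ℝ} (hx₀ : 0 ≤ x 0) (hx₀_le : x 0 ≤ 1 / 2)
    (hx : ∀ n, x (n + 1) = 1 / 3 + 2 / 3 * x n ^ 2) : Tendsto x atTop (𝓝 (1 / 2)) := by
  have hbound (n : ℕ) :
      0 ≤ x n ∧ 0 ≤ 1 / 2 - x n ∧ 1 / 2 - x n ≤ 1 / 2 * (2 / 3) ^ n := by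
    induction n with
    | zero => exact ⟨hx₀, by linarith, by linarith⟩
    | succ n ih =>
      obtain ⟨hpos, hle, hgap⟩ := ih
      rw [hx, pow_succ (2 / 3 : ℝ)]
      exact ⟨by positivity, by nlinarith, by nlinarith⟩
  have hgeom : Tendsto (fun n => 1 / 2 * (2 / 3 : ℝ) ^ n) atTop (𝓝 0) := by
    simpa using (tendsto_pow_atTop_nhds_zero_of_lt_one (r := (2 / 3 : ℝ))
      (by norm_num) (by norm_num)).const_mul _
  have hgap := squeeze_zero (fun n => (hbound n).2.1) (fun n => (hbound n).2.2) hgeom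
  simpa using (tendsto_const_nhds (x := (1 / 2 : ℝ))).sub hgap

theorem card_or_forall_bool {β : Type*} [Fintype β] (Q : β → Prop) [DecidablePred Q] :
    Fintype.card {x : Letter × (Bool → β) // x.1 = 0 ∨ ∀ d, Q (x.2 d)} =
      Fintype.card β ^ 2 + 2 * Fintype.card {y // Q y} ^ 2 := by
  have hforall :
      Fintype.card {f : Bool → β // ∀ d, Q (f d)} = Fintype.card {y // Q y} ^ 2 := by
    rw [Fintype.card_congr Equiv.subtypePiEquivPi]
    simp
  rw [← hforall, Fintype.card_subtype, Fintype.card_subtype, Finset.card_filter,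
    Finset.card_filter, Fintype.sum_prod_type, Fin.sum_univ_three]
  simp [two_mul, Finset.sum_boole, add_assoc]

theorem branchPrefix_succ (b : ℕ → Bool) (k : ℕ) :
    branchPrefix b (k + 1) = b 0 :: branchPrefix (Stream'.tail b) k := by
  simp [branchPrefix, List.ofFn_succ, Stream'.tail, Stream'.get]

theorem branchPrefix_cons (d : Bool) (b : ℕ → Bool) (k : ℕ) :
    branchPrefix (Stream'.cons d b) (k + 1) = d :: branchPrefix b k :=
  branchPrefix_succ _ k

def subtree {α : Type*} (d : Bool) (t : List Bool → α) : List Bool → α := fun v => t (d :: v)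

def L1Below (n : ℕ) : Set (List Bool → Letter) :=
  {t | ∀ b : ℕ → Bool, ∃ k < n, t (branchPrefix b k) = 0}

theorem monotone_L1Below : Monotone L1Below := fun _ _ hnm _ ht b =>
  let ⟨k, hk, h⟩ := ht b; ⟨k, hk.trans_le hnm, h⟩

theorem mem_L1Below_succ {t : List Bool → Letter} {n : ℕ} :
    t ∈ L1Below (n + 1) ↔ t [] = 0 ∨ ∀ d, subtree d t ∈ L1Below n := by
  constructor
  · refine fun ht => or_iff_not_imp_left.2 fun hroot d b => ?_
    obtain ⟨_ | k, hk, h⟩ := ht (Stream'.cons d b)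
    · exact absurd h hroot
    · exact ⟨k, Nat.succ_lt_succ_iff.1 hk, by rwa [branchPrefix_cons] at h⟩
  · rintro (hroot | hsub) b
    · exact ⟨0, n.succ_pos, hroot⟩
    · obtain ⟨k, hk, h⟩ := hsub (b 0) (Stream'.tail b)
      exact ⟨k + 1, Nat.succ_lt_succ hk, by rwa [branchPrefix_succ]⟩

theorem isOpen_setOf_branchPrefix (t : List Bool → Letter) (k : ℕ) :
    IsOpen {b : ℕ → Bool | t (branchPrefix b k) = 0} := by
  have : Continuous fun b : ℕ → Bool => t (branchPrefix b k) :=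
    continuous_of_discreteTopology (f := fun v : Fin k → Bool => t (List.ofFn v)).comp
      (continuous_pi fun i => continuous_apply (i : ℕ))
  exact (isOpen_discrete {0}).preimage this

theorem L1_eq_iUnion_L1Below : L1 = ⋃ n, L1Below n := by
  ext t
  simp only [Set.mem_iUnion]
  refine ⟨fun ht => ?_, fun ⟨n, hn⟩ b => let ⟨k, _, h⟩ := hn b; ⟨k, h⟩⟩
  obtain ⟨n, hn⟩ := isCompact_univ.elim_directed_cover
    (fun n => ⋃ k < n, {b : ℕ → Bool | t (branchPrefix b k) = 0})
    (fun n => isOpen_biUnion fun k _ => isOpen_setOf_branchPrefix t k)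
    (fun b _ => let ⟨k, hk⟩ := ht b
      Set.mem_iUnion.2 ⟨k + 1, Set.mem_biUnion k.lt_succ_self hk⟩)
    (Monotone.directed_le fun _ _ hnm =>
      Set.iUnion₂_mono' fun k hk => ⟨k, hk.trans_le hnm, subset_rfl⟩)
  exact ⟨n, fun b => by simpa using hn (Set.mem_univ b)⟩

def vertsBelow (n : ℕ) : Finset (List Bool) :=
  (Finset.range n).biUnion fun k => Finset.univ.image (List.ofFn : (Fin k → Bool) → List Bool)

theorem mem_vertsBelow {n : ℕ} {v : List Bool} : v ∈ vertsBelow n ↔ v.length < n := by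
  simp only [vertsBelow, Finset.mem_biUnion, Finset.mem_range, Finset.mem_image, Finset.mem_univ,
    true_and]
  exact ⟨fun ⟨k, hk, f, hf⟩ => hf ▸ by simpa using hk,
    fun h => ⟨_, h, v.get, List.ofFn_get v⟩⟩

theorem nil_mem_vertsBelow_succ (n : ℕ) : [] ∈ vertsBelow (n + 1) :=
  mem_vertsBelow.2 n.succ_pos

theorem cons_mem_vertsBelow_succ {n : ℕ} {v : List Bool} (d : Bool) :
    d :: v ∈ vertsBelow (n + 1) ↔ v ∈ vertsBelow n := by
  simp [mem_vertsBelow]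

def rootChildEquiv (α : Type*) (n : ℕ) :
    (vertsBelow (n + 1) → α) ≃ α × (Bool → vertsBelow n → α) where
  toFun g := (g ⟨[], nil_mem_vertsBelow_succ n⟩,
    fun d v => g ⟨d :: v, (cons_mem_vertsBelow_succ d).2 v.2⟩)
  invFun x
    | ⟨[], _⟩ => x.1
    | ⟨d :: v, h⟩ => x.2 d ⟨v, (cons_mem_vertsBelow_succ d).1 h⟩
  left_inv g := by
    funext ⟨v, hv⟩
    cases v <;> rfl
  right_inv _ := rfl

def HitsBelow : (n : ℕ) → (vertsBelow n → Letter) → Prop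
  | 0, _ => False
  | n + 1, g => (rootChildEquiv Letter n g).1 = 0 ∨
      ∀ d, HitsBelow n ((rootChildEquiv Letter n g).2 d)

theorem L1Below_eq_preimage (n : ℕ) :
    L1Below n = (vertsBelow n).restrict ⁻¹' {g | HitsBelow n g} := by
  induction n with
  | zero => simp [L1Below, HitsBelow]
  | succ n ih =>
    ext t
    rw [mem_L1Below_succ, ih]
    rfl

open scoped Classical in
noncomputable def hitFraction (n : ℕ) : ℝ :=
  Fintype.card {g // HitsBelow n g} / Fintype.card (vertsBelow n → Letter)

theorem hitFraction_zero : hitFraction 0 = 0 := by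
  have : IsEmpty {g // HitsBelow 0 g} := ⟨fun g => g.2⟩
  simp [hitFraction]

theorem hitFraction_succ (n : ℕ) : hitFraction (n + 1) = 1 / 3 + 2 / 3 * hitFraction n ^ 2 := by
  classical
  have hhits : Fintype.card {g // HitsBelow (n + 1) g} =
      Fintype.card (vertsBelow n → Letter) ^ 2 + 2 * Fintype.card {g // HitsBelow n g} ^ 2 := by
    rw [← card_or_forall_bool]
    exact Fintype.card_congr ((rootChildEquiv Letter n).subtypeEquiv fun _ => Iff.rfl)
  have hall : Fintype.card (vertsBelow (n + 1) → Letter) =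
      3 * Fintype.card (vertsBelow n → Letter) ^ 2 := by
    simp [Fintype.card_congr (rootChildEquiv Letter n)]
  have hpos : (0 : ℝ) < Fintype.card (vertsBelow n → Letter) := mod_cast Fintype.card_pos
  simp only [hitFraction]
  rw [hhits, hall]
  push_cast
  field_simp

theorem tendsto_hitFraction : Tendsto hitFraction atTop (𝓝 (1 / 2)) :=
  tendsto_half_of_recurrence (by simp [hitFraction_zero]) (by norm_num [hitFraction_zero])
    hitFraction_succ

theorem measure_L1Below {μ : Measure (List Bool → Letter)}
    (hμ : ∀ (s : Finset (List Bool)) (f : List Bool → Letter),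
      μ {t | ∀ v ∈ s, t v = f v} = (1/3 : ENNReal) ^ s.card) (n : ℕ) :
    μ (L1Below n) = ENNReal.ofReal (hitFraction n) := by
  classical
  rw [L1Below_eq_preimage, ← Finset.coe_filter_univ, measure_restrict_preimage hμ, hitFraction,
    Fintype.card_subtype, ENNReal.ofReal_div_of_pos (by positivity)]
  simp [ENNReal.div_eq_inv_mul, ENNReal.inv_pow, mul_comm]

theorem stmt_13_general (μ : Measure (List Bool → Letter))
    (hμ : ∀ (s : Finset (List Bool)) (f : List Bool → Letter),
      μ {t | ∀ v ∈ s, t v = f v} = (1/3 : ENNReal) ^ s.card) :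
    μ L1 = 1/2 := by
  have hlim : Tendsto (fun n => μ (L1Below n)) atTop (𝓝 (μ L1)) :=
    L1_eq_iUnion_L1Below ▸ tendsto_measure_iUnion_atTop monotone_L1Below
  have hfrac : Tendsto (fun n => μ (L1Below n)) atTop (𝓝 (ENNReal.ofReal (1 / 2))) := by
    simpa only [measure_L1Below hμ] using ENNReal.tendsto_ofReal tendsto_hitFraction
  rw [tendsto_nhds_unique hlim hfrac, ENNReal.ofReal_div_of_pos two_pos]
  simp

/-- If `μ` is the coin-flipping measure, i.e. a probability measure under which the labels
of the vertices are independent and uniform over the three letters (equivalently, every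
cylinder prescribing the labels of `k` distinct vertices has measure `(1/3)^k`), then
`μ L1 = 1/2`. -/
theorem stmt_13 (μ : Measure (List Bool → Letter)) [IsProbabilityMeasure μ]
    (hμ : ∀ (s : Finset (List Bool)) (f : List Bool → Letter),
      μ {t | ∀ v ∈ s, t v = f v} = (1/3 : ENNReal) ^ s.card) :
    μ L1 = 1/2 :=
  stmt_13_general μ hμ
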